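/- arXiv:1612.03234 — 5 statements merged into one kernel-verified Lean document; each statement's English description precedes it below -/
import Mathlib

section
/- If G is a germ, then no vector p ∈ G can have an entry whose value exceeds 1/d: for every p ∈ G and every index i, p(i) ≤ 1/d. -/
noncomputable section

/- Ambient space: ℝ^(d²) with the standard inner product. -/
abbrev V (d : ℕ) := EuclideanSpace ℝ (Fin (d^2))

/-- The standard inner product ⟨u, v⟩ = ∑ i, u i * v i. -/
def ip {d : ℕ} (u v : V d) : ℝ := inner ℝ u v

/-- The barycenter c, with all entries equal to 1/d². -/
def cpt (d : ℕ) : V d := WithLp.toLp 2 (fun _ => 1/(d^2:ℝ))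

/-- The hyperplane H = {u : ⟨u, c⟩ = 1/d²} of vectors whose entries sum to 1. -/
def Hs (d : ℕ) : Set (V d) := {u | ip u (cpt d) = 1/(d^2:ℝ)}

/-- The polar A* = {u ∈ H : ⟨u, v⟩ ≥ 1/(d(d+1)) for all v ∈ A}. -/
def polar (d : ℕ) (A : Set (V d)) : Set (V d) :=
  {u | u ∈ Hs d ∧ ∀ v ∈ A, 1/((d:ℝ)*((d:ℝ)+1)) ≤ ip u v}

/-- cc(A): the closed convex hull of A. -/
def cc (d : ℕ) (A : Set (V d)) : Set (V d) := closure (convexHull ℝ A)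

/-- The probability simplex Δ = {u ∈ H : u i ≥ 0 for all i}. -/
def probSimplex (d : ℕ) : Set (V d) := {u | u ∈ Hs d ∧ ∀ i, 0 ≤ u i}

/-- The basis distributions e_k, with e_k(i) = (δ_{ki} + 1/d)/(d+1). -/
def basisDist (d : ℕ) (k : Fin (d^2)) : V d :=
  WithLp.toLp 2 (fun i => ((if k = i then (1:ℝ) else 0) + 1/(d:ℝ)) / ((d:ℝ)+1))

/-- The basis simplex Δ_e: the convex hull of the basis distributions. -/
def basisSimplex (d : ℕ) : Set (V d) := convexHull ℝ (Set.range (basisDist d))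

/-- The out-ball B_o = {u ∈ H : ⟨u, u⟩ ≤ 2/(d(d+1))}. -/
def outBall (d : ℕ) : Set (V d) := {u | u ∈ Hs d ∧ ip u u ≤ 2/((d:ℝ)*((d:ℝ)+1))}

/-- The out-sphere S_o = {u ∈ H : ⟨u, u⟩ = 2/(d(d+1))}. -/
def outSphere (d : ℕ) : Set (V d) := {u | u ∈ Hs d ∧ ip u u = 2/((d:ℝ)*((d:ℝ)+1))}

/-- The in-ball B_i = {u ∈ H : ‖u − c‖² ≤ 1/(d²(d²−1))}. -/
def inBall (d : ℕ) : Set (V d) :=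
  {u | u ∈ Hs d ∧ ‖u - cpt d‖^2 ≤ 1/((d:ℝ)^2*((d:ℝ)^2-1))}

/-- The in-sphere S_i = {u ∈ H : ‖u − c‖² = 1/(d²(d²−1))}. -/
def inSphere (d : ℕ) : Set (V d) :=
  {u | u ∈ Hs d ∧ ‖u - cpt d‖^2 = 1/((d:ℝ)^2*((d:ℝ)^2-1))}

/-- The mid-ball B_m = {u ∈ H : ‖u − c‖² ≤ 1/(d²(d+1))}. -/
def midBall (d : ℕ) : Set (V d) :=
  {u | u ∈ Hs d ∧ ‖u - cpt d‖^2 ≤ 1/((d:ℝ)^2*((d:ℝ)+1))}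

/-- A germ: a subset of Δ whose pairwise inner products satisfy the
fundamental inequalities 1/(d(d+1)) ≤ ⟨p, s⟩ ≤ 2/(d(d+1)). -/
def IsGerm (d : ℕ) (G : Set (V d)) : Prop :=
  G ⊆ probSimplex d ∧
  ∀ p ∈ G, ∀ s ∈ G, 1/((d:ℝ)*((d:ℝ)+1)) ≤ ip p s ∧ ip p s ≤ 2/((d:ℝ)*((d:ℝ)+1))

/-- A qplex: a self-polar subset of Δ ∩ B_o. -/
def IsQplex (d : ℕ) (Q : Set (V d)) : Prop :=
  Q ⊆ probSimplex d ∩ outBall d ∧ Q = polar d Q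

/-- Action of a d²×d² matrix on a vector: (R u)(i) = ∑ j, R i j * u j. -/
def mvec (d : ℕ) (R : Matrix (Fin (d^2)) (Fin (d^2)) ℝ) (u : V d) : V d :=
  WithLp.toLp 2 (fun i => ∑ j, R i j * u j)

/-!
Write `t = p i`. Cauchy–Schwarz on the remaining `d² - 1` entries, which sum to `1 - t`, gives
`t² + (1 - t)² / (d² - 1) ≤ ⟨p, p⟩ ≤ 2 / (d(d + 1))`. Clearing denominators this is
`(d t - 1)(d² t + d - 2) ≤ 0`, and the second factor is positive once `d t > 1`.
-/

open Finset

lemma sq_sum_sub_le_card_sub_one_mul {ι : Type*} [Fintype ι] (f : ι → ℝ) (i : ι) :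
    (∑ j, f j - f i) ^ 2 ≤ (Fintype.card ι - 1) * (∑ j, f j ^ 2 - f i ^ 2) := by
  classical
  have h := sq_sum_le_card_mul_sum_sq (s := univ.erase i) (f := f)
  rwa [sum_erase_eq_sub (mem_univ i), sum_erase_eq_sub (mem_univ i),
    card_erase_of_mem (mem_univ i), card_univ,
    Nat.cast_sub (Fintype.card_pos_iff.mpr ⟨i⟩), Nat.cast_one] at h

lemma le_one_div_of_sum_eq_one_of_sum_sq_le {ι : Type*} [Fintype ι] {d : ℕ}
    (hcard : Fintype.card ι = d ^ 2) (f : ι → ℝ) (hsum : ∑ j, f j = 1)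
    (hsq : ∑ j, f j ^ 2 ≤ 2 / (d * (d + 1))) (i : ι) :
    f i ≤ 1 / d := by
  have hd : (1 : ℝ) ≤ d := by
    have : 0 < d ^ 2 := hcard ▸ Fintype.card_pos_iff.mpr ⟨i⟩
    exact_mod_cast Nat.pos_of_ne_zero (by rintro rfl; simp at this)
  have hcs := sq_sum_sub_le_card_sub_one_mul f i
  rw [hsum, hcard, Nat.cast_pow] at hcs
  have hsq' : (d : ℝ) * (d + 1) * ∑ j, f j ^ 2 ≤ 2 := by
    rwa [le_div_iff₀ (by positivity), mul_comm] at hsq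
  -- `(d t - 1)(d² t + d - 2) = d (1 - t)² + d (d² - 1) t² - 2 (d - 1)`
  have key : (d * f i - 1) * (d ^ 2 * f i + d - 2) ≤ 0 := by
    nlinarith [mul_le_mul_of_nonneg_left hsq' (by linarith : (0 : ℝ) ≤ d - 1),
      mul_le_mul_of_nonneg_left hcs (by linarith : (0 : ℝ) ≤ d)]
  rw [le_div_iff₀ (by linarith), mul_comm]
  by_contra! h
  nlinarith [mul_pos (sub_pos.mpr h) (by nlinarith : (0 : ℝ) < d ^ 2 * f i + d - 2)]

lemma ip_self {d : ℕ} (u : V d) : ip u u = ∑ j, u j ^ 2 := by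
  rw [ip, PiLp.inner_apply]
  simp [sq]

lemma sum_eq_one_of_mem_Hs {d : ℕ} (hd : d ≠ 0) {u : V d} (hu : u ∈ Hs d) : ∑ j, u j = 1 := by
  have h : ip u (cpt d) = (∑ j, u j) * (1 / (d ^ 2 : ℝ)) := by
    simp [ip, cpt, PiLp.inner_apply, sum_mul, mul_comm]
  have hu : ip u (cpt d) = 1 / (d ^ 2 : ℝ) := hu
  rw [h] at hu
  have : (d : ℝ) ^ 2 ≠ 0 := by positivity
  field_simp at hu
  exact hu

theorem statement3_general (d : ℕ) (G : Set (V d)) (hG : IsGerm d G)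
    (p : V d) (hp : p ∈ G) (i : Fin (d^2)) :
    p i ≤ 1/(d:ℝ) := by
  have hd : d ≠ 0 := by
    rintro rfl
    exact i.elim0
  apply le_one_div_of_sum_eq_one_of_sum_sq_le (Fintype.card_fin _) p
    (sum_eq_one_of_mem_Hs hd (hG.1 hp).1)
  rw [← ip_self]
  exact (hG.2 p hp p hp).2

/-- no vector in a germ has an entry exceeding 1/d. -/
theorem statement3 (d : ℕ) (hd : 2 ≤ d) (G : Set (V d)) (hG : IsGerm d G)
    (p : V d) (hp : p ∈ G) (i : Fin (d^2)) :
    p i ≤ 1/(d:ℝ) :=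
  statement3_general d G hG p hp i
end
end

section
/- Let A be a subset of Δ ∩ B_o. Then: (1) A is a germ if and only if A ⊆ A*; (2) A is a maximal germ if and only if A = A*. Consequently, the maximal germs are exactly the self-polar subsets of Δ ∩ B_o. -/
noncomputable section

/-- A maximal germ: a germ not properly contained in any other germ. -/
def IsMaximalGerm (d : ℕ) (G : Set (V d)) : Prop :=
  IsGerm d G ∧ ∀ G' : Set (V d), IsGerm d G' → G ⊆ G' → G' = G

/-! Inside the out-ball the upper germ bound is automatic, since `2 ip u v ≤ ip u u + ip v v`; so
a subset of `Δ ∩ B_o` is a germ exactly when it lies in its polar. For maximality, centre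
everything at `c = cpt d`: on the hyperplane `Hs d` one has
`ip u v = 1/d² + ⟪u - c, v - c⟫`, the out-ball and the in-ball become balls of radii
`r_o² = (d-1)/(d²(d+1))` and `r_i² = 1/(d²(d²-1))`, and the lower germ bound `1/(d(d+1))` is
`1/d² - r_o r_i`. By Cauchy–Schwarz every point of the in-ball thus pairs admissibly with every
point of the out-ball, and every point outside the out-ball pairs inadmissibly with the antipodal
point of the in-ball. A maximal germ therefore contains the in-ball and the basis distributions
`e_k`, which lie on the out-sphere and satisfy `ip u e_k = (u k + 1/d)/(d+1)`; so its polar lies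
in the out-ball and in the simplex, and every point of the polar can be added to the germ. -/

open scoped InnerProductSpace

section RealInner

variable {E : Type*} [NormedAddCommGroup E] [InnerProductSpace ℝ E]

lemma real_inner_le_of_inner_self_le {u v : E} {R : ℝ} (hu : ⟪u, u⟫_ℝ ≤ R)
    (hv : ⟪v, v⟫_ℝ ≤ R) : ⟪u, v⟫_ℝ ≤ R := by
  have := real_inner_self_nonneg (x := u - v)
  rw [inner_sub_left, inner_sub_right, inner_sub_right, real_inner_comm u v] at this
  linarith

lemma neg_le_real_inner_of_norm_sq_le {x y : E} {a b m : ℝ} (hx : ‖x‖ ^ 2 ≤ a)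
    (hy : ‖y‖ ^ 2 ≤ b) (hab : a * b ≤ m ^ 2) (hm : 0 ≤ m) : -m ≤ ⟪x, y⟫_ℝ := by
  have hsq : ⟪x, y⟫_ℝ ^ 2 ≤ m ^ 2 := calc
    ⟪x, y⟫_ℝ ^ 2 ≤ ‖x‖ ^ 2 * ‖y‖ ^ 2 := by
      rw [sq, ← real_inner_self_eq_norm_sq, ← real_inner_self_eq_norm_sq]
      exact real_inner_mul_inner_self_le x y
    _ ≤ a * b := mul_le_mul hx hy (by positivity) ((sq_nonneg _).trans hx)
    _ ≤ m ^ 2 := hab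
  exact (abs_le_of_sq_le_sq' hsq hm).1

lemma exists_smul_real_inner_lt {y : E} {a b m : ℝ} (ha : 0 < a) (hy : b < ‖y‖ ^ 2)
    (hab : a * b = m ^ 2) : ∃ t : ℝ, ‖t • y‖ ^ 2 ≤ a ∧ ⟪t • y, y⟫_ℝ < -m := by
  have hb : 0 ≤ b := nonneg_of_mul_nonneg_right (hab ▸ sq_nonneg m) ha
  have hy0 : 0 < ‖y‖ := by
    by_contra! h
    rw [norm_le_zero_iff.1 h, norm_zero] at hy
    linarith
  have hm_lt : m < √a * ‖y‖ := by
    refine lt_of_pow_lt_pow_left₀ 2 (by positivity) ?_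
    rw [mul_pow, Real.sq_sqrt ha.le, ← hab]
    exact mul_lt_mul_of_pos_left hy ha
  refine ⟨-(√a / ‖y‖), le_of_eq ?_, ?_⟩
  · rw [norm_smul, mul_pow, Real.norm_eq_abs, sq_abs, neg_sq, div_pow, Real.sq_sqrt ha.le,
      div_mul_cancel₀ _ (by positivity)]
  · rw [real_inner_smul_left, real_inner_self_eq_norm_sq]
    field_simp
    linarith

end RealInner

section Qplex

variable {d : ℕ}

lemma ip_eq_sum (u v : V d) : ip u v = ∑ i, u i * v i := by
  simp [ip, PiLp.inner_apply, mul_comm]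

lemma ip_comm (u v : V d) : ip u v = ip v u := real_inner_comm v u

lemma mem_Hs_iff (hd : d ≠ 0) {u : V d} : u ∈ Hs d ↔ ∑ i, u i = 1 := by
  simp only [Hs, cpt, ip_eq_sum, ← Finset.sum_mul, Set.mem_ofPred_eq]
  field_simp

lemma cpt_mem_Hs (hd : d ≠ 0) : cpt d ∈ Hs d := by
  simp only [cpt, mem_Hs_iff hd, Finset.sum_const, Finset.card_univ, Fintype.card_fin,
    nsmul_eq_mul, Nat.cast_pow]
  field_simp

lemma ip_eq_add_inner_sub_cpt (hd : d ≠ 0) {u v : V d} (hu : u ∈ Hs d) (hv : v ∈ Hs d) :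
    ip u v = 1 / (d:ℝ) ^ 2 + ⟪u - cpt d, v - cpt d⟫_ℝ := by
  have hc : ip (cpt d) (cpt d) = 1 / (d:ℝ) ^ 2 := cpt_mem_Hs hd
  have hu' : ip u (cpt d) = 1 / (d:ℝ) ^ 2 := hu
  have hv' : ip (cpt d) v = 1 / (d:ℝ) ^ 2 := (real_inner_comm _ _).trans hv
  simp only [ip] at hu' hv' hc ⊢
  rw [inner_sub_left, inner_sub_right, inner_sub_right, hu', hv', hc]
  ring

lemma cpt_add_smul_sub_mem_Hs (hd : d ≠ 0) {q : V d} (hq : q ∈ Hs d) (t : ℝ) :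
    cpt d + t • (q - cpt d) ∈ Hs d := by
  have hc : ip (cpt d) (cpt d) = 1 / (d:ℝ) ^ 2 := cpt_mem_Hs hd
  have hq' : ip q (cpt d) = 1 / (d:ℝ) ^ 2 := hq
  change ip _ _ = _
  simp only [ip] at hq' hc ⊢
  rw [inner_add_left, inner_smul_left, inner_sub_left, hq', hc]
  simp

lemma ip_basisDist (hd : d ≠ 0) {u : V d} (hu : u ∈ Hs d) (k : Fin (d ^ 2)) :
    ip u (basisDist d k) = (u k + 1 / d) / (d + 1) := by
  have hsum := (mem_Hs_iff hd).1 hu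
  simp only [ip_eq_sum, basisDist, mul_div_assoc', ← Finset.sum_div, mul_add,
    Finset.sum_add_distrib, mul_ite, mul_one, mul_zero, Finset.sum_ite_eq, hsum]
  simp

lemma one_div_le_ip_basisDist_iff (hd : d ≠ 0) {u : V d} (hu : u ∈ Hs d) (k : Fin (d ^ 2)) :
    1 / ((d:ℝ) * ((d:ℝ) + 1)) ≤ ip u (basisDist d k) ↔ 0 ≤ u k := by
  rw [ip_basisDist hd hu, ← div_div, div_le_div_iff_of_pos_right (by positivity),
    le_add_iff_nonneg_left]

lemma basisDist_mem_Hs (hd : d ≠ 0) (k : Fin (d ^ 2)) : basisDist d k ∈ Hs d := by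
  rw [mem_Hs_iff hd]
  simp only [basisDist, ← Finset.sum_div, Finset.sum_add_distrib, Finset.sum_ite_eq,
    Finset.mem_univ, ↓reduceIte, Finset.sum_const, Finset.card_univ, Fintype.card_fin,
    nsmul_eq_mul, Nat.cast_pow]
  field_simp
  ring

lemma ip_basisDist_self (hd : d ≠ 0) (k : Fin (d ^ 2)) :
    ip (basisDist d k) (basisDist d k) = 2 / ((d:ℝ) * ((d:ℝ) + 1)) := by
  rw [ip_basisDist hd (basisDist_mem_Hs hd k)]
  simp only [basisDist, PiLp.toLp_apply, ↓reduceIte]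
  field_simp
  ring

lemma basisDist_mem_probSimplex (hd : d ≠ 0) (k : Fin (d ^ 2)) :
    basisDist d k ∈ probSimplex d :=
  ⟨basisDist_mem_Hs hd k, fun i => by simp only [basisDist, PiLp.toLp_apply]; positivity⟩

lemma basisDist_mem_outBall (hd : d ≠ 0) (k : Fin (d ^ 2)) : basisDist d k ∈ outBall d :=
  ⟨basisDist_mem_Hs hd k, (ip_basisDist_self hd k).le⟩

lemma basisDist_mem_polar_probSimplex (hd : d ≠ 0) (k : Fin (d ^ 2)) :
    basisDist d k ∈ polar d (probSimplex d) :=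
  ⟨basisDist_mem_Hs hd k, fun v hv => by
    rw [ip_comm]
    exact (one_div_le_ip_basisDist_iff hd hv.1 k).2 (hv.2 k)⟩

lemma polar_subset_probSimplex (hd : d ≠ 0) {A : Set (V d)} (hA : ∀ k, basisDist d k ∈ A) :
    polar d A ⊆ probSimplex d :=
  fun _ hq => ⟨hq.1, fun k => (one_div_le_ip_basisDist_iff hd hq.1 k).1 (hq.2 _ (hA k))⟩

lemma one_div_le_ip_self (hd : d ≠ 0) {u : V d} (hu : u ∈ Hs d) :
    1 / ((d:ℝ) * ((d:ℝ) + 1)) ≤ ip u u := by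
  rw [ip_eq_add_inner_sub_cpt hd hu hu]
  have hdd : 1 / ((d:ℝ) * ((d:ℝ) + 1)) ≤ 1 / (d:ℝ) ^ 2 :=
    one_div_le_one_div_of_le (by positivity) (by nlinarith)
  linarith [real_inner_self_nonneg (x := u - cpt d)]

lemma ip_self_le_iff (hd : d ≠ 0) {u : V d} (hu : u ∈ Hs d) :
    ip u u ≤ 2 / ((d:ℝ) * ((d:ℝ) + 1)) ↔
      ‖u - cpt d‖ ^ 2 ≤ ((d:ℝ) - 1) / ((d:ℝ) ^ 2 * ((d:ℝ) + 1)) := by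
  have hr : 2 / ((d:ℝ) * ((d:ℝ) + 1)) =
      1 / (d:ℝ) ^ 2 + ((d:ℝ) - 1) / ((d:ℝ) ^ 2 * ((d:ℝ) + 1)) := by
    field_simp
    ring
  rw [ip_eq_add_inner_sub_cpt hd hu hu, real_inner_self_eq_norm_sq, hr, add_le_add_iff_left]

lemma inRadius_sq_mul_outRadius_sq (hd : 2 ≤ d) :
    1 / ((d:ℝ) ^ 2 * ((d:ℝ) ^ 2 - 1)) * (((d:ℝ) - 1) / ((d:ℝ) ^ 2 * ((d:ℝ) + 1))) =
      (1 / ((d:ℝ) ^ 2 * ((d:ℝ) + 1))) ^ 2 := by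
  have hD : (2:ℝ) ≤ d := by exact_mod_cast hd
  have h1 : (d:ℝ) - 1 ≠ 0 := by linarith
  have h2 : (d:ℝ) ^ 2 - 1 ≠ 0 := by nlinarith
  field_simp
  ring

lemma one_div_mul_succ_eq (hd : d ≠ 0) :
    1 / ((d:ℝ) * ((d:ℝ) + 1)) = 1 / (d:ℝ) ^ 2 - 1 / ((d:ℝ) ^ 2 * ((d:ℝ) + 1)) := by
  field_simp
  ring

lemma inBall_subset_polar_outBall (hd : 2 ≤ d) : inBall d ⊆ polar d (outBall d) := by
  have hd0 : d ≠ 0 := by omega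
  refine fun u hu => ⟨hu.1, fun v hv => ?_⟩
  have hlow := neg_le_real_inner_of_norm_sq_le hu.2 ((ip_self_le_iff hd0 hv.1).1 hv.2)
    (inRadius_sq_mul_outRadius_sq hd).le (by positivity)
  rw [ip_eq_add_inner_sub_cpt hd0 hu.1 hv.1, one_div_mul_succ_eq hd0]
  linarith

lemma inBall_subset_outBall (hd : 2 ≤ d) : inBall d ⊆ outBall d := by
  have hD : (2:ℝ) ≤ d := by exact_mod_cast hd
  refine fun u hu => ⟨hu.1, (ip_self_le_iff (by omega) hu.1).2 (hu.2.trans ?_)⟩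
  have hd2 : (0:ℝ) < (d:ℝ) ^ 2 - 1 := by nlinarith
  rw [div_le_div_iff₀ (by positivity) (by positivity)]
  nlinarith [mul_nonneg (by positivity : (0:ℝ) ≤ (d:ℝ) ^ 3 * (d + 1)) (sub_nonneg.2 hD)]

lemma inBall_subset_probSimplex (hd : 2 ≤ d) : inBall d ⊆ probSimplex d :=
  fun u hu => ⟨hu.1, fun k => (one_div_le_ip_basisDist_iff (by omega) hu.1 k).1
    ((inBall_subset_polar_outBall hd hu).2 _ (basisDist_mem_outBall (by omega) k))⟩

lemma polar_subset_outBall (hd : 2 ≤ d) {A : Set (V d)} (hA : inBall d ⊆ A) :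
    polar d A ⊆ outBall d := by
  have hd0 : d ≠ 0 := by omega
  have hD : (2:ℝ) ≤ d := by exact_mod_cast hd
  intro q hq
  refine ⟨hq.1, ?_⟩
  by_contra hqo
  rw [ip_self_le_iff hd0 hq.1, not_le] at hqo
  have hd2 : (0:ℝ) < (d:ℝ) ^ 2 - 1 := by nlinarith
  obtain ⟨t, ht, hlt⟩ :=
    exists_smul_real_inner_lt (by positivity) hqo (inRadius_sq_mul_outRadius_sq hd)
  set v := cpt d + t • (q - cpt d)
  have hvc : v - cpt d = t • (q - cpt d) := add_sub_cancel_left _ _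
  have hv : v ∈ inBall d := ⟨cpt_add_smul_sub_mem_Hs hd0 hq.1 t, hvc ▸ ht⟩
  have hqv := hq.2 v (hA hv)
  rw [ip_eq_add_inner_sub_cpt hd0 hq.1 hv.1, hvc, real_inner_comm, one_div_mul_succ_eq hd0]
    at hqv
  linarith

lemma polar_anti {A B : Set (V d)} (h : A ⊆ B) : polar d B ⊆ polar d A :=
  fun _ hu => ⟨hu.1, fun v hv => hu.2 v (h hv)⟩

lemma IsGerm.subset_polar {G A : Set (V d)} (hG : IsGerm d G) (hAG : A ⊆ G) :
    G ⊆ polar d A :=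
  fun p hp => ⟨(hG.1 hp).1, fun s hs => (hG.2 p hp s (hAG hs)).1⟩

lemma IsGerm.subset_probSimplex_inter_outBall {G : Set (V d)} (hG : IsGerm d G) :
    G ⊆ probSimplex d ∩ outBall d :=
  fun p hp => ⟨hG.1 hp, (hG.1 hp).1, (hG.2 p hp p hp).2⟩

lemma isGerm_iff_subset_polar {A : Set (V d)} (hA : A ⊆ probSimplex d ∩ outBall d) :
    IsGerm d A ↔ A ⊆ polar d A :=
  ⟨fun hG => hG.subset_polar subset_rfl, fun h => ⟨fun _ hp => (hA hp).1, fun _ hp s hs =>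
    ⟨(h hp).2 s hs, real_inner_le_of_inner_self_le (hA hp).2.2 (hA hs).2.2⟩⟩⟩

lemma IsMaximalGerm.mem_of_mem_polar (hd : d ≠ 0) {A : Set (V d)} (hA : IsMaximalGerm d A)
    {x : V d} (hx : x ∈ probSimplex d ∩ outBall d) (hxA : x ∈ polar d A) : x ∈ A := by
  have hAx : insert x A ⊆ probSimplex d ∩ outBall d :=
    Set.insert_subset hx hA.1.subset_probSimplex_inter_outBall
  have hGx : IsGerm d (insert x A) := by
    refine (isGerm_iff_subset_polar hAx).2 fun p hp => ⟨(hAx hp).1.1, ?_⟩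
    rintro s (rfl | hs)
    · rcases hp with rfl | hp
      · exact one_div_le_ip_self hd hx.1.1
      · rw [ip_comm]
        exact hxA.2 p hp
    · rcases hp with rfl | hp
      · exact hxA.2 s hs
      · exact (hA.1.2 p hp s hs).1
  exact hA.2 _ hGx (Set.subset_insert x A) ▸ Set.mem_insert x A

lemma IsMaximalGerm.eq_polar (hd : 2 ≤ d) {A : Set (V d)} (hA : IsMaximalGerm d A) :
    A = polar d A := by
  have hd0 : d ≠ 0 := by omega
  have hAΔ := hA.1.subset_probSimplex_inter_outBall
  have hbasis : ∀ k, basisDist d k ∈ A := fun k =>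
    hA.mem_of_mem_polar hd0 ⟨basisDist_mem_probSimplex hd0 k, basisDist_mem_outBall hd0 k⟩
      (polar_anti (hAΔ.trans Set.inter_subset_left) (basisDist_mem_polar_probSimplex hd0 k))
  have hin : inBall d ⊆ A := fun v hv =>
    hA.mem_of_mem_polar hd0 ⟨inBall_subset_probSimplex hd hv, inBall_subset_outBall hd hv⟩
      (polar_anti (hAΔ.trans Set.inter_subset_right) (inBall_subset_polar_outBall hd hv))
  exact (hA.1.subset_polar subset_rfl).antisymm fun q hq =>
    hA.mem_of_mem_polar hd0
      ⟨polar_subset_probSimplex hd0 hbasis hq, polar_subset_outBall hd hin hq⟩ hq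

lemma isMaximalGerm_of_eq_polar {A : Set (V d)} (hA : A ⊆ probSimplex d ∩ outBall d)
    (h : A = polar d A) : IsMaximalGerm d A :=
  ⟨(isGerm_iff_subset_polar hA).2 h.subset, fun _ hG hAG =>
    ((hG.subset_polar hAG).trans h.symm.subset).antisymm hAG⟩

end Qplex

/-- for A ⊆ Δ ∩ B_o, A is a germ iff A ⊆ A*, and A is a maximal
germ iff A = A*; hence maximal germs are exactly the qplexes. -/
theorem statement5 (d : ℕ) (hd : 2 ≤ d) (A : Set (V d))
    (hA : A ⊆ probSimplex d ∩ outBall d) :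
    (IsGerm d A ↔ A ⊆ polar d A) ∧
    (IsMaximalGerm d A ↔ A = polar d A) ∧
    (IsMaximalGerm d A ↔ IsQplex d A) := by
  have hmax : IsMaximalGerm d A ↔ A = polar d A :=
    ⟨IsMaximalGerm.eq_polar hd, isMaximalGerm_of_eq_polar hA⟩
  exact ⟨isGerm_iff_subset_polar hA, hmax, hmax.trans (and_iff_right hA).symm⟩
end
end

section
/- Let G be a germ. Then the stem and envelope of G are given by 𝒮(G) = cc(Δ_e ∪ B_i ∪ G) and ℰ(G) = Δ ∩ B_o ∩ G*. In particular, 𝒮(G) and ℰ(G) are mutually polar, and taking G = ∅ the principal stem and envelope are 𝒮 = cc(Δ_e ∪ B_i) and ℰ = Δ ∩ B_o. -/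
noncomputable section

/-- The stem of a germ G: the intersection of all qplexes containing G. -/
def stem (d : ℕ) (G : Set (V d)) : Set (V d) :=
  ⋂ Q ∈ {Q : Set (V d) | IsQplex d Q ∧ G ⊆ Q}, Q

/-- The envelope of a germ G: the union of all qplexes containing G. -/
def envl (d : ℕ) (G : Set (V d)) : Set (V d) :=
  ⋃ Q ∈ {Q : Set (V d) | IsQplex d Q ∧ G ⊆ Q}, Q


/-!
Translating by the barycenter `c`, the condition `1/(d(d+1)) ≤ ⟨u, v⟩` on `H` reads
`-r_i r_o ≤ ⟨u - c, v - c⟩`, where `r_i`, `r_o` are the radii of `B_i` and `B_o`; so the polar is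
the ordinary polar in the sum-zero hyperplane. A direct computation gives `{e_k}* = Δ` and
`B_i* = B_o`, and polars turn closed convex hulls of unions into intersections, whence
`cc(Δ_e ∪ B_i ∪ G)* = Δ ∩ B_o ∩ G*`; since `c ∈ B_i`, the bipolar theorem (Hahn–Banach) gives
the converse `(Δ ∩ B_o ∩ G*)* = cc(Δ_e ∪ B_i ∪ G)`.

A qplex `Q ⊇ G` lies in `Δ ∩ B_o ∩ G*`, hence contains its polar `cc(Δ_e ∪ B_i ∪ G)`.
Conversely every point of `Δ ∩ B_o ∩ G*` can be adjoined to `G`, and Zorn's lemma extends the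
resulting germ to a qplex; this identifies the envelope, and the stem lies between
`cc(Δ_e ∪ B_i ∪ G)` and the polar of the envelope, which coincide.
-/

open RealInnerProductSpace Set

namespace Qplex

variable {d : ℕ}

lemma ip_comm (u v : V d) : ip u v = ip v u := real_inner_comm v u

lemma cpt_mem_Hs (hd : d ≠ 0) : cpt d ∈ Hs d := by
  have : (d:ℝ) ≠ 0 := by exact_mod_cast hd
  show ⟪cpt d, cpt d⟫ = 1 / (d:ℝ)^2
  simp only [cpt, PiLp.inner_apply, RCLike.inner_apply, conj_trivial, Finset.sum_const,
    Finset.card_univ, Fintype.card_fin, nsmul_eq_mul]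
  push_cast
  field_simp

lemma inner_sub_cpt_cpt (hd : d ≠ 0) {u : V d} (hu : u ∈ Hs d) : ⟪u - cpt d, cpt d⟫ = 0 := by
  rw [inner_sub_left, show ⟪u, cpt d⟫ = _ from hu, show ⟪cpt d, cpt d⟫ = _ from cpt_mem_Hs hd,
    sub_self]

lemma ip_eq_inner_sub_cpt_add (hd : d ≠ 0) {u v : V d} (hu : u ∈ Hs d) (hv : v ∈ Hs d) :
    ip u v = ⟪u - cpt d, v - cpt d⟫ + 1 / (d:ℝ)^2 := by
  rw [inner_sub_right, inner_sub_cpt_cpt hd hu, sub_zero, inner_sub_left,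
    real_inner_comm v (cpt d), show ⟪v, cpt d⟫ = _ from hv, sub_add_cancel, ip]

lemma cpt_add_smul_mem_Hs (hd : d ≠ 0) {w : V d} (hw : ⟪w, cpt d⟫ = 0) (s : ℝ) :
    cpt d + s • w ∈ Hs d := by
  show ⟪cpt d + s • w, cpt d⟫ = _
  rw [inner_add_left, real_inner_smul_left, hw, mul_zero, add_zero]
  exact cpt_mem_Hs hd

lemma ip_cpt_add_smul {y : V d} (hy : y ∈ Hs d) (w : V d) (s : ℝ) :
    ip (cpt d + s • w) y = 1 / (d:ℝ)^2 + s * ⟪w, y⟫ := by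
  rw [ip, inner_add_left, real_inner_smul_left, real_inner_comm, show ⟪y, cpt d⟫ = _ from hy]

lemma isClosed_Hs : IsClosed (Hs d) :=
  isClosed_eq (continuous_id.inner continuous_const) continuous_const

lemma convex_Hs : Convex ℝ (Hs d) :=
  convex_hyperplane (f := fun u => ⟪u, cpt d⟫)
    ⟨fun _ _ => inner_add_left _ _ _, fun _ _ => real_inner_smul_left _ _ _⟩ _

lemma one_div_mul_add_one_lt_one_div_sq (hd : d ≠ 0) :
    1/((d:ℝ)*((d:ℝ)+1)) < 1/(d:ℝ)^2 := by
  have : (0:ℝ) < d := by positivity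
  exact one_div_lt_one_div_of_lt (by positivity) (by nlinarith)

lemma polar_anti {A B : Set (V d)} (h : A ⊆ B) : polar d B ⊆ polar d A :=
  fun _ hu => ⟨hu.1, fun v hv => hu.2 v (h hv)⟩

lemma polar_union (A B : Set (V d)) : polar d (A ∪ B) = polar d A ∩ polar d B := by
  ext u
  simp only [polar, mem_ofPred_eq, mem_inter_iff, mem_union, or_imp, forall_and]
  tauto

lemma polar_empty : polar d ∅ = Hs d := by
  ext u
  simp [polar]

lemma subset_polar_comm {A B : Set (V d)} (hB : B ⊆ Hs d) (h : A ⊆ polar d B) :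
    B ⊆ polar d A :=
  fun v hv => ⟨hB hv, fun u hu => ip_comm u v ▸ (h hu).2 v hv⟩

lemma subset_polar_polar {A : Set (V d)} (hA : A ⊆ Hs d) : A ⊆ polar d (polar d A) :=
  subset_polar_comm hA subset_rfl

lemma isClosed_ip_ge (v : V d) (r : ℝ) : IsClosed {u : V d | r ≤ ip u v} :=
  isClosed_le continuous_const (continuous_id.inner continuous_const)

lemma convex_ip_ge (v : V d) (r : ℝ) : Convex ℝ {u : V d | r ≤ ip u v} :=
  convex_halfSpace_ge (f := fun u => ⟪u, v⟫)
    ⟨fun _ _ => inner_add_left _ _ _, fun _ _ => real_inner_smul_left _ _ _⟩ r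

lemma polar_eq_inter_iInter (A : Set (V d)) :
    polar d A = Hs d ∩ ⋂ v ∈ A, {u | 1/((d:ℝ)*((d:ℝ)+1)) ≤ ip u v} := by
  ext u
  simp [polar]

lemma isClosed_polar (A : Set (V d)) : IsClosed (polar d A) := by
  rw [polar_eq_inter_iInter]
  exact isClosed_Hs.inter (isClosed_biInter fun v _ => isClosed_ip_ge v _)

lemma convex_polar (A : Set (V d)) : Convex ℝ (polar d A) := by
  rw [polar_eq_inter_iInter]
  exact convex_Hs.inter (convex_iInter₂ fun v _ => convex_ip_ge v _)

lemma subset_cc (A : Set (V d)) : A ⊆ cc d A :=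
  (subset_convexHull ℝ A).trans subset_closure

lemma cc_subset {A S : Set (V d)} (hA : A ⊆ S) (hS : IsClosed S) (hS' : Convex ℝ S) :
    cc d A ⊆ S :=
  closure_minimal (convexHull_min hA hS') hS

lemma polar_cc (A : Set (V d)) : polar d (cc d A) = polar d A := by
  refine (polar_anti (subset_cc A)).antisymm fun u hu => ⟨hu.1, fun v hv => ?_⟩
  have hA : A ⊆ {v | 1/((d:ℝ)*((d:ℝ)+1)) ≤ ip v u} := fun v hv => by
    rw [mem_ofPred_eq, ip_comm]; exact hu.2 v hv
  rw [ip_comm]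
  exact cc_subset hA (isClosed_ip_ge u _) (convex_ip_ge u _) hv

lemma polar_convexHull (A : Set (V d)) : polar d (convexHull ℝ A) = polar d A :=
  (polar_anti (subset_convexHull ℝ A)).antisymm
    ((polar_cc A).symm.subset.trans (polar_anti subset_closure))

lemma exists_inner_eq_sub_on_Hs (hd : d ≠ 0) (f : StrongDual ℝ (V d)) :
    ∃ w : V d, ∀ y ∈ Hs d, ⟪w, y⟫ = f y - f (cpt d) := by
  have : (d:ℝ) ≠ 0 := by exact_mod_cast hd
  refine ⟨(InnerProductSpace.toDual ℝ (V d)).symm f - ((d:ℝ)^2 * f (cpt d)) • cpt d,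
    fun y hy => ?_⟩
  rw [inner_sub_left, real_inner_smul_left, InnerProductSpace.toDual_symm_apply,
    real_inner_comm, show ⟪y, cpt d⟫ = _ from hy]
  field_simp

theorem polar_polar (hd : d ≠ 0) {A : Set (V d)} (hA : A ⊆ Hs d) (hc : cpt d ∈ A) :
    polar d (polar d A) = cc d A := by
  refine Subset.antisymm (fun u hu => ?_)
    (cc_subset (subset_polar_polar hA) (isClosed_polar _) (convex_polar _))
  by_contra huA
  obtain ⟨f, β, hfu, hfA⟩ :=
    geometric_hahn_banach_point_closed (convex_convexHull ℝ A).closure isClosed_closure huA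
  obtain ⟨w, hw⟩ := exists_inner_eq_sub_on_Hs hd f
  have hccH : cc d A ⊆ Hs d := cc_subset hA isClosed_Hs convex_Hs
  have hα : β - f (cpt d) < 0 := by linarith [hfA _ (subset_cc A hc)]
  have hgap := sub_pos.2 (one_div_mul_add_one_lt_one_div_sq hd)
  obtain ⟨s, hs, hsα⟩ : ∃ s : ℝ, 0 < s ∧
      s * (β - f (cpt d)) = -(1/(d:ℝ)^2 - 1/((d:ℝ)*((d:ℝ)+1))) :=
    ⟨_ / -(β - f (cpt d)), div_pos hgap (neg_pos.2 hα),
      by rw [div_neg, neg_mul, div_mul_cancel₀ _ hα.ne]⟩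
  -- `cpt d + s • w` lies in `polar d A` but pairs with `u` below the bound.
  have hz : cpt d + s • w ∈ polar d A := by
    rw [← polar_cc]
    refine ⟨cpt_add_smul_mem_Hs hd (by rw [hw _ (cpt_mem_Hs hd), sub_self]) s, fun y hy => ?_⟩
    rw [ip_cpt_add_smul (hccH hy), hw y (hccH hy)]
    nlinarith [hfA y hy]
  have hu' := hu.2 _ hz
  rw [ip_comm, ip_cpt_add_smul hu.1, hw u hu.1] at hu'
  nlinarith

lemma basisDist_eq (hd : d ≠ 0) (k : Fin (d^2)) :
    basisDist d k = (1/((d:ℝ)+1)) • (EuclideanSpace.single k 1 + (d:ℝ) • cpt d) := by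
  have : (d:ℝ) ≠ 0 := by exact_mod_cast hd
  ext i
  simp only [basisDist, cpt, PiLp.smul_apply, PiLp.add_apply, PiLp.single_apply,
    smul_eq_mul]
  by_cases h : k = i <;> simp [h, eq_comm] <;> field_simp

lemma ip_basisDist (hd : d ≠ 0) {u : V d} (hu : u ∈ Hs d) (k : Fin (d^2)) :
    ip u (basisDist d k) = 1/((d:ℝ)*((d:ℝ)+1)) + u k / ((d:ℝ)+1) := by
  have : (d:ℝ) ≠ 0 := by exact_mod_cast hd
  rw [basisDist_eq hd, ip, real_inner_smul_right, inner_add_right, real_inner_smul_right,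
    EuclideanSpace.inner_single_right, show ⟪u, cpt d⟫ = _ from hu]
  simp only [conj_trivial, one_mul]
  field_simp
  ring

lemma basisDist_mem_Hs (hd : d ≠ 0) (k : Fin (d^2)) : basisDist d k ∈ Hs d := by
  have : (d:ℝ) ≠ 0 := by exact_mod_cast hd
  show ip _ (cpt d) = _
  rw [ip_comm, ip_basisDist hd (cpt_mem_Hs hd)]
  simp only [cpt]
  field_simp

lemma basisDist_mem_probSimplex (hd : d ≠ 0) (k : Fin (d^2)) :
    basisDist d k ∈ probSimplex d :=
  ⟨basisDist_mem_Hs hd k, fun i => by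
    show 0 ≤ ((if k = i then (1:ℝ) else 0) + 1/(d:ℝ)) / ((d:ℝ)+1)
    split_ifs <;> positivity⟩

lemma basisDist_mem_outBall (hd : d ≠ 0) (k : Fin (d^2)) : basisDist d k ∈ outBall d := by
  have : (d:ℝ) ≠ 0 := by exact_mod_cast hd
  refine ⟨basisDist_mem_Hs hd k, le_of_eq ?_⟩
  rw [ip_basisDist hd (basisDist_mem_Hs hd k)]
  simp only [basisDist, if_pos]
  field_simp
  norm_num

lemma polar_range_basisDist (hd : d ≠ 0) :
    polar d (range (basisDist d)) = probSimplex d := by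
  ext u
  simp only [polar, probSimplex, forall_mem_range, mem_ofPred_eq]
  refine and_congr_right fun hu => forall_congr' fun k => ?_
  rw [ip_basisDist hd hu, le_add_iff_nonneg_right, le_div_iff₀ (by positivity), zero_mul]

def inRadius (d : ℕ) : ℝ := √(1/((d:ℝ)^2*((d:ℝ)^2-1)))

/-- `ip u u = ‖u - cpt d‖² + 1/d²` on `Hs d`, so this is the Euclidean radius of `outBall d`. -/
def outRadius (d : ℕ) : ℝ := √(2/((d:ℝ)*((d:ℝ)+1)) - 1/(d:ℝ)^2)

lemma mem_inBall_iff (hd : d ≠ 0) {u : V d} :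
    u ∈ inBall d ↔ u ∈ Hs d ∧ ‖u - cpt d‖ ≤ inRadius d := by
  have : (1:ℝ) ≤ (d:ℝ)^2 := by
    have : (1:ℝ) ≤ d := by exact_mod_cast Nat.one_le_iff_ne_zero.2 hd
    nlinarith
  rw [inRadius, Real.le_sqrt (norm_nonneg _) (by positivity [sub_nonneg.2 this])]
  rfl

lemma mem_outBall_iff (hd : d ≠ 0) {u : V d} :
    u ∈ outBall d ↔ u ∈ Hs d ∧ ‖u - cpt d‖ ≤ outRadius d := by
  have hd1 : (1:ℝ) ≤ d := by exact_mod_cast Nat.one_le_iff_ne_zero.2 hd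
  have hgap : 0 ≤ 2/((d:ℝ)*((d:ℝ)+1)) - 1/(d:ℝ)^2 := by
    rw [div_sub_div _ _ (by positivity) (by positivity)]
    exact div_nonneg (by nlinarith) (by positivity)
  refine and_congr_right fun hu => ?_
  rw [outRadius, Real.le_sqrt (norm_nonneg _) hgap, ip_eq_inner_sub_cpt_add hd hu hu,
    real_inner_self_eq_norm_sq]
  constructor <;> intro h <;> linarith

lemma inRadius_mul_outRadius (hd : 2 ≤ d) :
    inRadius d * outRadius d = 1/(d:ℝ)^2 - 1/((d:ℝ)*((d:ℝ)+1)) := by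
  have hd2 : (2:ℝ) ≤ d := by exact_mod_cast hd
  have h1 : (d:ℝ)^2 - 1 ≠ 0 := by nlinarith
  have hgap := sub_nonneg.2 (one_div_mul_add_one_lt_one_div_sq (d := d) (by omega)).le
  rw [inRadius, outRadius, ← Real.sqrt_mul (by positivity [show (0:ℝ) ≤ (d:ℝ)^2 - 1 by nlinarith]),
    ← Real.sqrt_sq hgap]
  congr 1
  field_simp
  ring

lemma inRadius_pos (hd : 2 ≤ d) : 0 < inRadius d := by
  have hd2 : (2:ℝ) ≤ d := by exact_mod_cast hd
  exact Real.sqrt_pos.2 (by positivity [show (0:ℝ) < (d:ℝ)^2 - 1 by nlinarith])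

lemma inRadius_le_outRadius (hd : 2 ≤ d) : inRadius d ≤ outRadius d := by
  have hd2 : (2:ℝ) ≤ d := by exact_mod_cast hd
  refine Real.sqrt_le_sqrt ?_
  rw [div_sub_div _ _ (by positivity) (by positivity),
    div_le_div_iff₀ (by positivity [show (0:ℝ) < (d:ℝ)^2 - 1 by nlinarith]) (by positivity),
    ← sub_nonneg]
  have h : (1:ℝ) ≤ ((d:ℝ) - 1)^2 := by nlinarith
  have e : (2 * (d:ℝ)^2 - d * (d + 1) * 1) * (d^2 * (d^2 - 1)) - 1 * (d * (d + 1) * d^2)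
      = (d:ℝ)^3 * (d + 1) * (((d:ℝ) - 1)^2 - 1) := by ring
  rw [e]
  exact mul_nonneg (by positivity) (sub_nonneg.2 h)

lemma cpt_mem_inBall (hd : d ≠ 0) : cpt d ∈ inBall d :=
  (mem_inBall_iff hd).2 ⟨cpt_mem_Hs hd, by rw [sub_self, norm_zero]; exact Real.sqrt_nonneg _⟩

lemma polar_inBall (hd : 2 ≤ d) : polar d (inBall d) = outBall d := by
  have hd0 : d ≠ 0 := by omega
  have hrr := inRadius_mul_outRadius hd
  ext u
  rw [mem_outBall_iff hd0]
  constructor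
  · rintro ⟨hu, hpol⟩
    refine ⟨hu, le_of_not_gt fun hlt => ?_⟩
    set r := ‖u - cpt d‖
    have hr : 0 < r := (Real.sqrt_nonneg _).trans_lt hlt
    -- the point of `inBall d` diametrically opposite to `u`
    set z := cpt d + (-(inRadius d / r)) • (u - cpt d)
    have hz : z ∈ inBall d := by
      refine (mem_inBall_iff hd0).2 ⟨cpt_add_smul_mem_Hs hd0 (inner_sub_cpt_cpt hd0 hu) _, ?_⟩
      simp only [z, add_sub_cancel_left, norm_smul, norm_neg, Real.norm_eq_abs]
      rw [abs_of_pos (div_pos (inRadius_pos hd) hr), div_mul_cancel₀ _ hr.ne']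
    have h := hpol z hz
    have hur : ⟪u - cpt d, u⟫ = r ^ 2 := by
      rw [← real_inner_self_eq_norm_sq, inner_sub_right (u - cpt d) u, inner_sub_cpt_cpt hd0 hu]
      ring
    have e : inRadius d / r * r ^ 2 = inRadius d * r := by field_simp
    rw [ip_comm, ip_cpt_add_smul hu, hur, neg_mul, e] at h
    nlinarith [inRadius_pos hd]
  · rintro ⟨hu, hur⟩
    refine ⟨hu, fun v hv => ?_⟩
    obtain ⟨hv, hvr⟩ := (mem_inBall_iff hd0).1 hv
    rw [ip_eq_inner_sub_cpt_add hd0 hu hv]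
    have hcs := neg_le_of_abs_le (abs_real_inner_le_norm (u - cpt d) (v - cpt d))
    have := mul_le_mul hur hvr (norm_nonneg _) (Real.sqrt_nonneg _)
    nlinarith

lemma inBall_subset_probSimplex (hd : 2 ≤ d) : inBall d ⊆ probSimplex d := by
  have hd0 : d ≠ 0 := by omega
  rw [← polar_range_basisDist hd0]
  refine subset_polar_comm (fun _ h => h.1) ?_
  rw [polar_inBall hd]
  exact range_subset_iff.2 (basisDist_mem_outBall hd0)

lemma inBall_subset_outBall (hd : 2 ≤ d) : inBall d ⊆ outBall d := fun u hu => by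
  have hd0 : d ≠ 0 := by omega
  obtain ⟨hu, hur⟩ := (mem_inBall_iff hd0).1 hu
  exact (mem_outBall_iff hd0).2 ⟨hu, hur.trans (inRadius_le_outRadius hd)⟩

lemma le_ip_self (hd : d ≠ 0) {u : V d} (hu : u ∈ Hs d) : 1/((d:ℝ)*((d:ℝ)+1)) ≤ ip u u := by
  rw [ip_eq_inner_sub_cpt_add hd hu hu, real_inner_self_eq_norm_sq]
  nlinarith [one_div_mul_add_one_lt_one_div_sq hd, sq_nonneg ‖u - cpt d‖]

lemma ip_le_of_mem_outBall {u v : V d} (hu : u ∈ outBall d) (hv : v ∈ outBall d) :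
    ip u v ≤ 2/((d:ℝ)*((d:ℝ)+1)) := by
  have hu' : ‖u‖^2 ≤ 2/((d:ℝ)*((d:ℝ)+1)) := real_inner_self_eq_norm_sq u ▸ hu.2
  have hv' : ‖v‖^2 ≤ 2/((d:ℝ)*((d:ℝ)+1)) := real_inner_self_eq_norm_sq v ▸ hv.2
  have := norm_sub_sq_real u v
  show ⟪u, v⟫ ≤ _
  nlinarith [sq_nonneg ‖u - v‖]

lemma isGerm_iff {G : Set (V d)} :
    IsGerm d G ↔ G ⊆ probSimplex d ∩ outBall d ∩ polar d G := by
  constructor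
  · intro hG p hp
    exact ⟨⟨hG.1 hp, (hG.1 hp).1, (hG.2 p hp p hp).2⟩, (hG.1 hp).1, fun s hs => (hG.2 p hp s hs).1⟩
  · intro h
    exact ⟨fun p hp => (h hp).1.1, fun p hp s hs =>
      ⟨(h hp).2.2 s hs, ip_le_of_mem_outBall (h hp).1.2 (h hs).1.2⟩⟩

lemma _root_.IsGerm.insert (hd : d ≠ 0) {G : Set (V d)} (hG : IsGerm d G) {x : V d}
    (hx : x ∈ probSimplex d ∩ outBall d ∩ polar d G) : IsGerm d (insert x G) := by
  rw [isGerm_iff] at hG ⊢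
  rintro y (rfl | hy)
  · refine ⟨hx.1, hx.2.1, ?_⟩
    rintro v (rfl | hv)
    exacts [le_ip_self hd hx.2.1, hx.2.2 v hv]
  · refine ⟨(hG hy).1, (hG hy).2.1, ?_⟩
    rintro v (rfl | hv)
    exacts [ip_comm v y ▸ hx.2.2 y hy, (hG hy).2.2 v hv]

lemma isGerm_sUnion {c : Set (Set (V d))} (hc : ∀ G ∈ c, IsGerm d G)
    (hch : IsChain (· ⊆ ·) c) : IsGerm d (⋃₀ c) := by
  refine ⟨sUnion_subset fun G hG => (hc G hG).1, ?_⟩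
  rintro p ⟨A, hA, hpA⟩ s ⟨B, hB, hsB⟩
  rcases hch.total hA hB with h | h
  exacts [(hc B hB).2 p (h hpA) s hsB, (hc A hA).2 p hpA s (h hsB)]

/-- A maximal germ contains the basis distributions and the in-ball, whose polars confine its
polar to `probSimplex d ∩ outBall d`. -/
lemma isQplex_of_maximal (hd : 2 ≤ d) {M : Set (V d)} (hM : Maximal (IsGerm d) M) :
    IsQplex d M := by
  have hd0 : d ≠ 0 := by omega
  have hMsub := isGerm_iff.1 hM.prop
  have hE : probSimplex d ∩ outBall d ∩ polar d M ⊆ M :=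
    fun x hx => hM.mem_of_prop_insert (hM.prop.insert hd0 hx)
  have hMΔB : M ⊆ probSimplex d ∩ outBall d := fun p hp => (hMsub hp).1
  have hbasis : range (basisDist d) ⊆ M := by
    rintro _ ⟨k, rfl⟩
    refine hE ⟨⟨basisDist_mem_probSimplex hd0 k, basisDist_mem_outBall hd0 k⟩, ?_⟩
    refine polar_anti (hMΔB.trans inter_subset_left) (subset_polar_comm ?_ ?_ (mem_range_self k))
    · exact range_subset_iff.2 (basisDist_mem_Hs hd0)
    · exact (polar_range_basisDist hd0).ge
  have hball : inBall d ⊆ M := fun z hz =>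
    hE ⟨⟨inBall_subset_probSimplex hd hz, inBall_subset_outBall hd hz⟩,
      polar_anti (hMΔB.trans inter_subset_right)
        (subset_polar_comm (fun _ h => h.1) (polar_inBall hd).ge hz)⟩
  refine ⟨hMΔB, Subset.antisymm (fun p hp => (hMsub hp).2) fun u hu => hE ⟨?_, hu⟩⟩
  rw [← polar_range_basisDist hd0, ← polar_inBall hd, ← polar_union]
  exact polar_anti (union_subset hbasis hball) hu

lemma exists_isQplex_superset (hd : 2 ≤ d) {G : Set (V d)} (hG : IsGerm d G) :
    ∃ Q, IsQplex d Q ∧ G ⊆ Q := by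
  obtain ⟨M, hGM, hM⟩ := zorn_subset_nonempty {G | IsGerm d G}
    (fun c hc hch _ => ⟨⋃₀ c, isGerm_sUnion hc hch, fun _ => subset_sUnion_of_mem⟩) G hG
  exact ⟨M, isQplex_of_maximal hd hM, hGM⟩

lemma _root_.IsQplex.subset_of_subset {G Q : Set (V d)} (hQ : IsQplex d Q) (hGQ : G ⊆ Q) :
    Q ⊆ probSimplex d ∩ outBall d ∩ polar d G :=
  fun _ hx => ⟨hQ.1 hx, polar_anti hGQ (hQ.2.subset hx)⟩

lemma polar_cc_basisSimplex_union (hd : 2 ≤ d) (G : Set (V d)) :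
    polar d (cc d (basisSimplex d ∪ inBall d ∪ G)) = probSimplex d ∩ outBall d ∩ polar d G := by
  rw [polar_cc, polar_union, polar_union, basisSimplex, polar_convexHull,
    polar_range_basisDist (by omega), polar_inBall hd]

lemma polar_probSimplex_inter (hd : 2 ≤ d) {G : Set (V d)} (hG : G ⊆ Hs d) :
    polar d (probSimplex d ∩ outBall d ∩ polar d G) = cc d (basisSimplex d ∪ inBall d ∪ G) := by
  have hd0 : d ≠ 0 := by omega
  rw [← polar_cc_basisSimplex_union hd, polar_cc,
    polar_polar hd0 _ (Or.inl (Or.inr (cpt_mem_inBall hd0)))]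
  refine union_subset (union_subset ?_ fun _ h => h.1) hG
  exact convexHull_min (range_subset_iff.2 (basisDist_mem_Hs hd0)) convex_Hs

lemma mem_stem {G : Set (V d)} {x : V d} :
    x ∈ stem d G ↔ ∀ Q, IsQplex d Q → G ⊆ Q → x ∈ Q := by
  simp [stem]

lemma mem_envl {G : Set (V d)} {x : V d} :
    x ∈ envl d G ↔ ∃ Q, IsQplex d Q ∧ G ⊆ Q ∧ x ∈ Q := by
  simp [envl, and_assoc]

lemma envl_eq (hd : 2 ≤ d) {G : Set (V d)} (hG : IsGerm d G) :
    envl d G = probSimplex d ∩ outBall d ∩ polar d G := by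
  ext x
  rw [mem_envl]
  refine ⟨fun ⟨Q, hQ, hGQ, hx⟩ => hQ.subset_of_subset hGQ hx, fun hx => ?_⟩
  obtain ⟨Q, hQ, hxGQ⟩ := exists_isQplex_superset hd (hG.insert (by omega) hx)
  exact ⟨Q, hQ, (subset_insert _ _).trans hxGQ, hxGQ (mem_insert _ _)⟩

lemma stem_subset_polar_envl {G : Set (V d)} (hG : ∃ Q, IsQplex d Q ∧ G ⊆ Q) :
    stem d G ⊆ polar d (envl d G) := by
  obtain ⟨Q₀, hQ₀, hGQ₀⟩ := hG
  intro x hx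
  rw [mem_stem] at hx
  refine ⟨(hQ₀.1 (hx Q₀ hQ₀ hGQ₀)).1.1, fun z hz => ?_⟩
  obtain ⟨Q, hQ, hGQ, hzQ⟩ := mem_envl.1 hz
  exact (hQ.2.subset (hx Q hQ hGQ)).2 z hzQ

lemma stem_eq (hd : 2 ≤ d) {G : Set (V d)} (hG : IsGerm d G) :
    stem d G = cc d (basisSimplex d ∪ inBall d ∪ G) := by
  have hGH : G ⊆ Hs d := fun p hp => (hG.1 hp).1
  rw [← polar_probSimplex_inter hd hGH]
  refine Subset.antisymm ?_ fun x hx => mem_stem.2 fun Q hQ hGQ => ?_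
  · rw [← envl_eq hd hG]
    exact stem_subset_polar_envl (exists_isQplex_superset hd hG)
  · exact hQ.2.superset (polar_anti (hQ.subset_of_subset hGQ) hx)

lemma isGerm_empty : IsGerm d ∅ := ⟨empty_subset _, by simp⟩

end Qplex

open Qplex

/-- 𝒮(G) = cc(Δ_e ∪ B_i ∪ G), ℰ(G) = Δ ∩ B_o ∩ G*, these are
mutually polar, and in particular 𝒮 = cc(Δ_e ∪ B_i) and ℰ = Δ ∩ B_o. -/
theorem statement6 (d : ℕ) (hd : 2 ≤ d) (G : Set (V d)) (hG : IsGerm d G) :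
    stem d G = cc d (basisSimplex d ∪ inBall d ∪ G) ∧
    envl d G = probSimplex d ∩ outBall d ∩ polar d G ∧
    polar d (stem d G) = envl d G ∧
    polar d (envl d G) = stem d G ∧
    stem d (∅ : Set (V d)) = cc d (basisSimplex d ∪ inBall d) ∧
    envl d (∅ : Set (V d)) = probSimplex d ∩ outBall d := by
  have hGH : G ⊆ Hs d := fun p hp => (hG.1 hp).1
  refine ⟨stem_eq hd hG, envl_eq hd hG, ?_, ?_, ?_, ?_⟩
  · rw [stem_eq hd hG, envl_eq hd hG, polar_cc_basisSimplex_union hd]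
  · rw [stem_eq hd hG, envl_eq hd hG, polar_probSimplex_inter hd hGH]
  · rw [stem_eq hd isGerm_empty, union_empty]
  · rw [envl_eq hd isGerm_empty, polar_empty, inter_eq_left.2 fun _ h => h.1.1]
end
end

section
/- Let G be a closed germ and let s be any point on the out-sphere S_o. Then s ∈ G if and only if the polar point s* lies on the boundary of the polar G*. -/
noncomputable section

/-- The out-sphere radius r_o, with r_o² = (d²−1)/(d²(d+1)²). -/
def rO (d : ℕ) : ℝ := Real.sqrt (((d:ℝ)^2-1)/((d:ℝ)^2*((d:ℝ)+1)^2))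

/-- The in-sphere radius r_i, with r_i² = 1/(d²(d²−1)). -/
def rI (d : ℕ) : ℝ := Real.sqrt (1/((d:ℝ)^2*((d:ℝ)^2-1)))

/-- The polar point s* = c − (r_o r_i/‖s−c‖²)(s − c). -/
def polarPoint (d : ℕ) (s : V d) : V d :=
  cpt d - ((rO d * rI d)/‖s - cpt d‖^2) • (s - cpt d)

/-- The boundary of a subset of H, relative to the hyperplane H. -/
def relBoundary (d : ℕ) (S : Set (V d)) : Set (V d) :=
  closure S ∩ closure (Hs d \ S)

/-!
For `s` on the out-sphere the polar point is `s* = c - (d - 1)⁻¹ • (s - c)`, so for `v ∈ H`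
the polar inequality `1/(d(d+1)) ≤ ⟪s*, v⟫` is equivalent to the germ inequality
`⟪s, v⟫ ≤ 2/(d(d+1))`. Hence `s ∈ G` puts `s*` in `G*`, while moving `s*` in the direction
`c - s` makes `⟪·, s⟫` drop below `1/(d(d+1))` and so leaves `G*`. Conversely, if `s*` lies in
the closed set `G*` but `s ∉ G`, then `⟪s, v⟫ < 2/(d(d+1))` on `G`: equality together with
`⟪v, v⟫ ≤ ⟪s, s⟫` forces `v = s`. As `G` is compact, the strict inequalities
`1/(d(d+1)) < ⟪u, v⟫` persist for all `u` near `s*`, so a neighbourhood of `s*` in `H`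
lies in `G*`.
-/

open Topology
open scoped RealInnerProductSpace

section InnerProductSpace

variable {E : Type*} [NormedAddCommGroup E] [InnerProductSpace ℝ E]

theorem eq_of_inner_self_le_of_inner_eq {x y : E} (hx : ⟪x, x⟫ ≤ ⟪y, y⟫)
    (hxy : ⟪x, y⟫ = ⟪y, y⟫) : x = y := by
  have h : ‖x - y‖ ^ 2 ≤ 0 := by
    rw [norm_sub_sq_real, ← real_inner_self_eq_norm_sq, ← real_inner_self_eq_norm_sq]
    linarith
  exact sub_eq_zero.mp (norm_eq_zero.mp ((pow_eq_zero_iff two_ne_zero).mp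
    (le_antisymm h (sq_nonneg _))))

theorem IsCompact.eventually_forall_lt_inner {K : Set E} (hK : IsCompact K) {p : E} {a : ℝ}
    (h : ∀ v ∈ K, a < ⟪p, v⟫) : ∀ᶠ u in 𝓝 p, ∀ v ∈ K, a < ⟪u, v⟫ :=
  hK.eventually_forall_of_forall_eventually fun v hv =>
    continuous_inner.continuousAt.eventually (lt_mem_nhds (h v hv))

end InnerProductSpace

variable {d : ℕ}

theorem ip_cpt_right (u : V d) : ip u (cpt d) = (∑ i, u i) / (d ^ 2 : ℝ) := by
  simp [ip, cpt, PiLp.inner_apply, div_eq_mul_inv, Finset.sum_mul, mul_comm]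

theorem ip_cpt_cpt (hd : d ≠ 0) : ip (cpt d) (cpt d) = 1 / (d ^ 2 : ℝ) := by
  rw [ip_cpt_right]
  simp only [cpt, one_div, Finset.sum_const, Finset.card_univ, Fintype.card_fin, nsmul_eq_mul,
    Nat.cast_pow]
  field_simp

theorem probSimplex_eq_image_stdSimplex (hd : d ≠ 0) :
    probSimplex d = WithLp.toLp 2 '' stdSimplex ℝ (Fin (d ^ 2)) := by
  have hsum (u : V d) : u ∈ Hs d ↔ ∑ i, u i = 1 := by
    have : (d : ℝ) ≠ 0 := by exact_mod_cast hd
    change ip u (cpt d) = _ ↔ _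
    rw [ip_cpt_right, div_left_inj' (by positivity)]
  ext u
  refine ⟨fun ⟨hu, hnonneg⟩ => ⟨WithLp.ofLp u, ⟨hnonneg, (hsum u).1 hu⟩, rfl⟩, ?_⟩
  rintro ⟨f, ⟨hnonneg, hf⟩, rfl⟩
  exact ⟨(hsum _).2 hf, hnonneg⟩

theorem isCompact_probSimplex (hd : d ≠ 0) : IsCompact (probSimplex d) := by
  rw [probSimplex_eq_image_stdSimplex hd]
  exact (isCompact_stdSimplex ℝ _).image (PiLp.continuous_toLp 2 _)

theorem isClosed_Hs : IsClosed (Hs d) :=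
  isClosed_eq (continuous_id.inner continuous_const) continuous_const

theorem isClosed_polar (A : Set (V d)) : IsClosed (polar d A) := by
  have : polar d A = Hs d ∩ ⋂ v ∈ A, {u | 1 / ((d : ℝ) * ((d : ℝ) + 1)) ≤ ip u v} := by
    ext u
    simp [polar]
  rw [this]
  exact isClosed_Hs.inter <| isClosed_biInter fun v _ =>
    isClosed_le continuous_const (continuous_id.inner continuous_const)

section OutSphere

variable {s : V d}

theorem polarPoint_eq_of_mem_outSphere (hd : 2 ≤ d) (hs : s ∈ outSphere d) :
    polarPoint d s = cpt d - ((d : ℝ) - 1)⁻¹ • (s - cpt d) := by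
  have hd1 : (0 : ℝ) < d - 1 := sub_pos.mpr (by exact_mod_cast hd)
  have hsc : ‖s - cpt d‖ ^ 2 = ((d : ℝ) - 1) / ((d : ℝ) ^ 2 * ((d : ℝ) + 1)) := by
    rw [norm_sub_sq_real, ← real_inner_self_eq_norm_sq, ← real_inner_self_eq_norm_sq]
    change ip s s - 2 * ip s (cpt d) + ip (cpt d) (cpt d) = _
    rw [hs.2, hs.1, ip_cpt_cpt (by omega)]
    field_simp
    ring
  have hrr : rO d * rI d = 1 / ((d : ℝ) ^ 2 * ((d : ℝ) + 1)) := by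
    have hd2 : (0 : ℝ) < d ^ 2 - 1 := by nlinarith
    rw [rO, rI, ← Real.sqrt_mul (div_nonneg hd2.le (by positivity)),
      ← Real.sqrt_sq (by positivity : (0 : ℝ) ≤ 1 / ((d : ℝ) ^ 2 * ((d : ℝ) + 1)))]
    congr 1
    field_simp
  rw [polarPoint, hrr, hsc]
  congr 2
  field_simp

theorem ip_polarPoint (hd : 2 ≤ d) (hs : s ∈ outSphere d) {v : V d} (hv : v ∈ Hs d) :
    ip (polarPoint d s) v
      = 1 / ((d : ℝ) * ((d : ℝ) + 1))
        + ((d : ℝ) - 1)⁻¹ * (2 / ((d : ℝ) * ((d : ℝ) + 1)) - ip s v) := by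
  have hd1 : (0 : ℝ) < d - 1 := sub_pos.mpr (by exact_mod_cast hd)
  have hcv : ⟪cpt d, v⟫ = 1 / (d ^ 2 : ℝ) := by rw [real_inner_comm]; exact hv
  simp only [polarPoint_eq_of_mem_outSphere hd hs, ip, inner_sub_left, real_inner_smul_left, hcv]
  field_simp
  ring

theorem polarPoint_mem_Hs (hd : 2 ≤ d) (hs : s ∈ outSphere d) : polarPoint d s ∈ Hs d := by
  have hsc : ⟪s, cpt d⟫ = 1 / (d ^ 2 : ℝ) := hs.1
  have hcc : ⟪cpt d, cpt d⟫ = 1 / (d ^ 2 : ℝ) := ip_cpt_cpt (by omega)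
  change ⟪_, _⟫ = _
  simp only [polarPoint_eq_of_mem_outSphere hd hs, inner_sub_left, real_inner_smul_left, hsc, hcc]
  ring

theorem polarPoint_mem_polar_iff (hd : 2 ≤ d) (hs : s ∈ outSphere d) {A : Set (V d)}
    (hA : A ⊆ Hs d) :
    polarPoint d s ∈ polar d A ↔ ∀ v ∈ A, ip s v ≤ 2 / ((d : ℝ) * ((d : ℝ) + 1)) := by
  have hd1 : (0 : ℝ) < ((d : ℝ) - 1)⁻¹ := inv_pos.mpr (sub_pos.mpr (by exact_mod_cast hd))
  refine (and_iff_right (polarPoint_mem_Hs hd hs)).trans (forall₂_congr fun v hv => ?_)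
  rw [ip_polarPoint hd hs (hA hv), le_add_iff_nonneg_right, mul_nonneg_iff_of_pos_left hd1,
    sub_nonneg]

theorem polarPoint_mem_closure_diff_polar (hd : 2 ≤ d) (hs : s ∈ outSphere d) {A : Set (V d)}
    (hsA : s ∈ A) :
    polarPoint d s ∈ closure (Hs d \ polar d A) := by
  have hd1 : (1 : ℝ) < d := by exact_mod_cast hd
  have hsc : ⟪s, cpt d⟫ = 1 / (d ^ 2 : ℝ) := hs.1
  have hcs : ⟪cpt d, s⟫ = 1 / (d ^ 2 : ℝ) := by rw [real_inner_comm]; exact hsc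
  have hcc : ⟪cpt d, cpt d⟫ = 1 / (d ^ 2 : ℝ) := ip_cpt_cpt (by omega)
  have hss : ⟪s, s⟫ = 2 / ((d : ℝ) * ((d : ℝ) + 1)) := hs.2
  have hpc : ⟪polarPoint d s, cpt d⟫ = 1 / (d ^ 2 : ℝ) := polarPoint_mem_Hs hd hs
  have hps : ⟪polarPoint d s, s⟫ = 1 / ((d : ℝ) * ((d : ℝ) + 1)) := by
    change ip _ _ = _
    rw [ip_polarPoint hd hs hs.1, hs.2]
    ring
  have hcont : Continuous fun t : ℝ => polarPoint d s + t • (cpt d - s) := by fun_prop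
  refine mem_closure_of_tendsto (b := 𝓝[>] (0 : ℝ))
    (by simpa using (hcont.tendsto 0).mono_left nhdsWithin_le_nhds) ?_
  filter_upwards [self_mem_nhdsWithin] with t (ht : 0 < t)
  refine ⟨?_, fun hmem => ?_⟩
  · change ⟪_, _⟫ = _
    simp only [inner_add_left, real_inner_smul_left, inner_sub_left, hpc, hsc, hcc]
    ring
  · have h := hmem.2 s hsA
    change _ ≤ ⟪_, _⟫ at h
    simp only [inner_add_left, real_inner_smul_left, inner_sub_left, hps, hcs, hss] at h
    have : 1 / (d ^ 2 : ℝ) < 2 / ((d : ℝ) * ((d : ℝ) + 1)) := by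
      rw [div_lt_div_iff₀ (by positivity) (by positivity)]
      nlinarith
    nlinarith

theorem polarPoint_notMem_closure_diff_polar (hd : 2 ≤ d) (hs : s ∈ outSphere d) {A : Set (V d)}
    (hA : IsCompact A) (hAH : A ⊆ Hs d)
    (h : ∀ v ∈ A, ip s v < 2 / ((d : ℝ) * ((d : ℝ) + 1))) :
    polarPoint d s ∉ closure (Hs d \ polar d A) := by
  have hd1 : (0 : ℝ) < ((d : ℝ) - 1)⁻¹ := inv_pos.mpr (sub_pos.mpr (by exact_mod_cast hd))
  have hlt : ∀ v ∈ A, 1 / ((d : ℝ) * ((d : ℝ) + 1)) < ⟪polarPoint d s, v⟫ := by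
    intro v hv
    change _ < ip _ _
    rw [ip_polarPoint hd hs (hAH hv), lt_add_iff_pos_right]
    exact mul_pos hd1 (sub_pos.mpr (h v hv))
  intro hmem
  obtain ⟨u, ⟨huH, hu⟩, hu'⟩ :=
    ((mem_closure_iff_frequently.mp hmem).and_eventually
      (hA.eventually_forall_lt_inner hlt)).exists
  exact hu ⟨huH, fun v hv => (hu' v hv).le⟩

end OutSphere

/-- for a closed germ G and s on the out-sphere, s ∈ G iff the
polar point s* lies on the (relative) boundary of G*. -/
theorem statement8 (d : ℕ) (hd : 2 ≤ d) (G : Set (V d)) (hG : IsGerm d G)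
    (hclosed : IsClosed G) (s : V d) (hs : s ∈ outSphere d) :
    s ∈ G ↔ polarPoint d s ∈ relBoundary d (polar d G) := by
  have hGH : G ⊆ Hs d := fun v hv => (hG.1 hv).1
  constructor
  · intro hsG
    refine ⟨subset_closure ?_, polarPoint_mem_closure_diff_polar hd hs hsG⟩
    exact (polarPoint_mem_polar_iff hd hs hGH).2 fun v hv => (hG.2 s hsG v hv).2
  · rintro ⟨hmem, hdiff⟩
    rw [(isClosed_polar G).closure_eq, polarPoint_mem_polar_iff hd hs hGH] at hmem
    by_contra hsG
    have hGcompact : IsCompact G :=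
      (isCompact_probSimplex (by omega)).of_isClosed_subset hclosed hG.1
    refine polarPoint_notMem_closure_diff_polar hd hs hGcompact hGH
      (fun v hv => (hmem v hv).lt_of_ne fun hsv => hsG ?_) hdiff
    have hvv : ip v v ≤ ip s s := hs.2 ▸ (hG.2 v hv v hv).2
    rwa [← eq_of_inner_self_le_of_inner_eq hvv
      (by rw [real_inner_comm]; exact hsv.trans hs.2.symm)]
end
end

section
/- If Q is a qplex whose intersection with the out-sphere S_o is infinite (i.e. Q contains infinitely many pure points), then no polytope inscribed in Q contains the in-sphere: for every finite set F ⊆ Q, the convex hull of F does not contain S_i. -/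
noncomputable section

/-!
Send each pure point `p` to its antipode `c - (p - c)/(d - 1)` through the barycenter, which lies on
the in-sphere and satisfies `⟨p, antipode⟩ = 1/(d(d+1))`, the least value `⟨p, ·⟩` takes on `Q`.
If the antipode lies in the convex hull of a finite `F ⊆ Q`, it lies in the convex hull of the face
`{f ∈ F | ⟨p, f⟩ = 1/(d(d+1))}`. There are only finitely many such faces, so two distinct pure
points `p ≠ q` share one; then `⟨p - q, ·⟩` vanishes on both antipodes, whose difference is a
nonzero multiple of `p - q`.
-/

section ExposedFace

variable {𝕜 E : Type*} [Field 𝕜] [LinearOrder 𝕜] [IsStrictOrderedRing 𝕜]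
  [AddCommGroup E] [Module 𝕜 E]

theorem mem_convexHull_sep_eq_of_le {ℓ : E →ₗ[𝕜] 𝕜} {s : Set E} {m : 𝕜}
    (hs : ∀ y ∈ s, m ≤ ℓ y) {x : E} (hx : x ∈ convexHull 𝕜 s) (hxm : ℓ x ≤ m) :
    x ∈ convexHull 𝕜 {y ∈ s | ℓ y = m} := by
  classical
  rw [convexHull_eq] at hx
  obtain ⟨ι, t, w, z, hw₀, hw₁, hz, rfl⟩ := hx
  have hsum : ∑ i ∈ t, w i * (ℓ (z i) - m) = ℓ (t.centerMass w z) - m := by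
    simp only [Finset.centerMass_eq_of_sum_1 _ _ hw₁, map_sum, map_smul, smul_eq_mul, mul_sub,
      Finset.sum_sub_distrib, ← Finset.sum_mul, hw₁, one_mul]
  have hterm : ∀ i ∈ t, 0 ≤ w i * (ℓ (z i) - m) :=
    fun i hi => mul_nonneg (hw₀ i hi) (sub_nonneg.2 (hs _ (hz i hi)))
  have hzero := (Finset.sum_eq_zero_iff_of_nonneg hterm).1
    (le_antisymm (by linarith) (Finset.sum_nonneg hterm))
  rw [← Finset.centerMass_filter_ne_zero]
  refine Finset.centerMass_mem_convexHull _ (fun i hi => hw₀ i (Finset.filter_subset _ _ hi))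
    (by rw [Finset.sum_filter_ne_zero, hw₁]; exact one_pos) fun i hi => ?_
  obtain ⟨hit, hwi⟩ := Finset.mem_filter.1 hi
  exact ⟨hz i hit, sub_eq_zero.1 ((mul_eq_zero.1 (hzero i hit)).resolve_left hwi)⟩

theorem convexHull_sep_eq_subset (ℓ : E →ₗ[𝕜] 𝕜) (s : Set E) (m : 𝕜) :
    convexHull 𝕜 {y ∈ s | ℓ y = m} ⊆ {x | ℓ x = m} :=
  convexHull_min (fun _ hy => hy.2) (convex_hyperplane ℓ.isLinear m)

end ExposedFace

def antipodal (d : ℕ) (p : V d) : V d := cpt d - ((d : ℝ) - 1)⁻¹ • (p - cpt d)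

theorem ip_cpt_self (d : ℕ) : ip (cpt d) (cpt d) = 1 / (d ^ 2 : ℝ) := by
  simp only [ip, cpt, PiLp.inner_apply, RCLike.inner_apply, conj_trivial, Finset.sum_const,
    Finset.card_univ, Fintype.card_fin, nsmul_eq_mul]
  push_cast
  rcases eq_or_ne (d : ℝ) 0 with hd | hd
  · simp [hd]
  · field_simp

section Antipodal

variable {d : ℕ}

theorem inner_antipodal (u p : V d) :
    ip u (antipodal d p) = ip u (cpt d) - ((d : ℝ) - 1)⁻¹ * (ip u p - ip u (cpt d)) := by
  simp only [ip, antipodal, inner_sub_right, real_inner_smul_right]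

theorem antipodal_sub_antipodal (p q : V d) :
    antipodal d p - antipodal d q = -((d : ℝ) - 1)⁻¹ • (p - q) := by
  simp only [antipodal, smul_sub, neg_smul]
  abel

theorem eq_of_ip_antipodal_add_eq (hd : 2 ≤ d) {p q : V d}
    (h : ip p (antipodal d p) + ip q (antipodal d q) =
      ip p (antipodal d q) + ip q (antipodal d p)) : p = q := by
  have hd' : (2 : ℝ) ≤ d := by exact_mod_cast hd
  have hd₁ : ((d : ℝ) - 1)⁻¹ ≠ 0 := inv_ne_zero (by linarith)
  have hnorm : inner ℝ (p - q) (antipodal d p - antipodal d q) =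
      -((d : ℝ) - 1)⁻¹ * ‖p - q‖ ^ 2 := by
    rw [antipodal_sub_antipodal, real_inner_smul_right, real_inner_self_eq_norm_sq]
  have hzero : inner ℝ (p - q) (antipodal d p - antipodal d q) = 0 := by
    simp only [ip] at h
    simp only [inner_sub_left, inner_sub_right]
    linarith
  simpa [sub_eq_zero, hd₁] using hnorm.symm.trans hzero

theorem ip_antipodal_self (hd : 2 ≤ d) {p : V d} (hp : p ∈ outSphere d) :
    ip p (antipodal d p) = 1 / ((d : ℝ) * ((d : ℝ) + 1)) := by
  have hd' : (2 : ℝ) ≤ d := by exact_mod_cast hd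
  rw [inner_antipodal, hp.1, hp.2]
  have : (d : ℝ) - 1 ≠ 0 := by linarith
  field_simp
  ring

theorem antipodal_mem_inSphere (hd : 2 ≤ d) {p : V d} (hp : p ∈ outSphere d) :
    antipodal d p ∈ inSphere d := by
  have hd' : (2 : ℝ) ≤ d := by exact_mod_cast hd
  have hd₁ : (d : ℝ) - 1 ≠ 0 := by linarith
  have hpc : ip (cpt d) p = 1 / (d ^ 2 : ℝ) := by rw [ip, real_inner_comm]; exact hp.1
  refine ⟨?_, ?_⟩
  · show ip (antipodal d p) (cpt d) = _
    rw [ip, real_inner_comm, ← ip, inner_antipodal, hpc, ip_cpt_self]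
    ring
  · have hsq : ‖p - cpt d‖ ^ 2 = ((d : ℝ) - 1) / ((d : ℝ) ^ 2 * ((d : ℝ) + 1)) := by
      have hpp : inner ℝ p p = 2 / ((d : ℝ) * ((d : ℝ) + 1)) := hp.2
      have hp₁ : inner ℝ p (cpt d) = 1 / (d ^ 2 : ℝ) := hp.1
      have hcc : inner ℝ (cpt d) (cpt d) = 1 / (d ^ 2 : ℝ) := ip_cpt_self d
      rw [← real_inner_self_eq_norm_sq, inner_sub_left, inner_sub_right, inner_sub_right, hpp,
        hp₁, hcc, real_inner_comm, hp₁]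
      field_simp
      ring
    rw [show antipodal d p - cpt d = -((d : ℝ) - 1)⁻¹ • (p - cpt d) by
        simp only [antipodal, neg_smul]; abel,
      norm_smul, mul_pow, hsq, Real.norm_eq_abs, sq_abs]
    have : (d : ℝ) ^ 2 - 1 ≠ 0 := by nlinarith
    field_simp
    ring

end Antipodal

theorem IsQplex.le_ip {d : ℕ} {Q : Set (V d)} (hQ : IsQplex d Q) {p q : V d} (hp : p ∈ Q)
    (hq : q ∈ Q) : 1 / ((d : ℝ) * ((d : ℝ) + 1)) ≤ ip p q := by
  rw [hQ.2] at hp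
  exact hp.2 q hq

/-- if a qplex has infinitely many pure points, no inscribed
polytope contains the in-sphere. -/
theorem statement13 (d : ℕ) (hd : 2 ≤ d) (Q : Set (V d)) (hQ : IsQplex d Q)
    (hinf : (Q ∩ outSphere d).Infinite)
    (F : Set (V d)) (hF : F ⊆ Q) (hfin : F.Finite) :
    ¬ inSphere d ⊆ convexHull ℝ F := by
  intro hsub
  set m : ℝ := 1 / ((d : ℝ) * ((d : ℝ) + 1))
  let face : V d → Set (V d) := fun p => {f ∈ F | (innerSL ℝ p).toLinearMap f = m}
  have antipodal_mem_face : ∀ p ∈ Q ∩ outSphere d, antipodal d p ∈ convexHull ℝ (face p) :=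
    fun p hp => mem_convexHull_sep_eq_of_le (fun f hf => hQ.le_ip hp.1 (hF hf))
      (hsub (antipodal_mem_inSphere hd hp.2)) (ip_antipodal_self hd hp.2).le
  have ip_eq_of_mem_face : ∀ p x, x ∈ convexHull ℝ (face p) → ip p x = m :=
    fun p x hx => convexHull_sep_eq_subset _ F m hx
  have face_mapsTo : Set.MapsTo face (Q ∩ outSphere d) {t | t ⊆ F} :=
    fun _ _ => Set.sep_subset F _
  obtain ⟨p, hp, q, hq, hne, hface⟩ :=
    hinf.exists_ne_map_eq_of_mapsTo face_mapsTo hfin.finite_subsets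
  refine hne (eq_of_ip_antipodal_add_eq hd ?_)
  rw [ip_antipodal_self hd hp.2, ip_antipodal_self hd hq.2,
    ip_eq_of_mem_face p _ (hface ▸ antipodal_mem_face q hq),
    ip_eq_of_mem_face q _ (hface ▸ antipodal_mem_face p hp)]
end
end
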